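/- arXiv:2310.04063 — 4 statements merged into one kernel-verified Lean document; each statement's English description precedes it below -/
import Mathlib

section
/- Let A ∈ ℂ^{p×q} and B ∈ ℂ^{q×r}. The equality X = AB holds if and only if there exist Hermitian positive semidefinite matrices S ∈ ℂ^{p×p} and T ∈ ℂ^{r×r} such that the block matrix [[S, X, A],[Xᴴ, T, Bᴴ],[Aᴴ, B, I_q]] is positive semidefinite and Tr(S - AAᴴ) ≤ 0. -/
/-!
Taking the Schur complement of the identity block, the block matrix is positive semidefinite iff
`[[S - A Aᴴ, X - A B], [(X - A B)ᴴ, T - Bᴴ B]]` is. Its top-left block is then positive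
semidefinite with nonpositive trace, hence zero, and a positive semidefinite matrix with a zero
diagonal block has zero off-diagonal blocks.
-/

open Matrix ComplexOrder

namespace Matrix

variable {α 𝕜 : Type*} {l m n : Type*}

theorem fromBlocks_fromCols_fromRows_submatrix_sumAssoc (S : Matrix l l α) (X : Matrix l m α)
    (A : Matrix l n α) (Y : Matrix m l α) (Z : Matrix n l α) (T : Matrix m m α)
    (U : Matrix m n α) (V : Matrix n m α) (W : Matrix n n α) :
    (fromBlocks S (fromCols X A) (fromRows Y Z) (fromBlocks T U V W)).submatrix
        (Equiv.sumAssoc l m n) (Equiv.sumAssoc l m n) =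
      fromBlocks (fromBlocks S X Y T) (fromRows A U) (fromCols Z V) W := by
  ext ((i | i) | i) ((j | j) | j) <;> rfl

variable [RCLike 𝕜] [Fintype l] [Fintype m] [Fintype n]

theorem posSemidef_fromBlocks_one_iff [DecidableEq n] (P : Matrix m m 𝕜) (C : Matrix m n 𝕜) :
    (fromBlocks P C Cᴴ 1).PosSemidef ↔ (P - C * Cᴴ).PosSemidef := by
  have : Invertible (1 : Matrix n n 𝕜) := invertibleOne
  rw [PosDef.fromBlocks₂₂ P C PosDef.one, inv_one, Matrix.mul_one]

theorem PosSemidef.eq_zero_of_re_trace_nonpos {P : Matrix n n 𝕜} (hP : P.PosSemidef)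
    (htr : RCLike.re P.trace ≤ 0) : P = 0 := by
  obtain ⟨hre, him⟩ := RCLike.nonneg_iff.mp hP.trace_nonneg
  refine hP.trace_eq_zero_iff.mp (RCLike.ext ?_ ?_) <;> simp [le_antisymm htr hre, him]

theorem PosSemidef.eq_zero_of_fromBlocks_zero {C : Matrix m n 𝕜} {D : Matrix n n 𝕜}
    (h : (fromBlocks 0 C Cᴴ D).PosSemidef) : C = 0 := by
  rw [← conjTranspose_eq_zero, ext_iff_mulVec]
  intro v
  have hv := (h.dotProduct_mulVec_zero_iff (Sum.elim v 0)).mp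
    (by simp [fromBlocks_mulVec, Function.star_sumElim])
  simpa [fromBlocks_mulVec] using congrArg (· ∘ Sum.inr) hv

theorem posSemidef_fromBlocks_fromCols_iff [DecidableEq n] (S : Matrix l l 𝕜)
    (T : Matrix m m 𝕜) (X : Matrix l m 𝕜) (A : Matrix l n 𝕜) (B : Matrix n m 𝕜) :
    (fromBlocks S (fromCols X A) (fromRows Xᴴ Aᴴ) (fromBlocks T Bᴴ B 1)).PosSemidef ↔
      (fromBlocks (S - A * Aᴴ) (X - A * B) (X - A * B)ᴴ (T - Bᴴ * B)).PosSemidef := by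
  rw [← posSemidef_submatrix_equiv (Equiv.sumAssoc l m n),
    fromBlocks_fromCols_fromRows_submatrix_sumAssoc,
    show fromCols Aᴴ B = (fromRows A Bᴴ)ᴴ by
      rw [conjTranspose_fromRows_eq_fromCols_conjTranspose, conjTranspose_conjTranspose],
    posSemidef_fromBlocks_one_iff, conjTranspose_fromRows_eq_fromCols_conjTranspose,
    fromRows_mul_fromCols, sub_eq_add_neg, fromBlocks_neg, fromBlocks_add]
  simp [sub_eq_add_neg]

end Matrix

/-- Lemma 1: `X = A * B` iff there exist PSD matrices `S`, `T` such that the block matrix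
`[[S, X, A], [Xᴴ, T, Bᴴ], [Aᴴ, B, I]]` is PSD and `Tr(S - A Aᴴ) ≤ 0`. -/
theorem stmt_4 (p q r : ℕ)
    (X : Matrix (Fin p) (Fin r) ℂ) (A : Matrix (Fin p) (Fin q) ℂ)
    (B : Matrix (Fin q) (Fin r) ℂ) :
    X = A * B ↔
      ∃ (S : Matrix (Fin p) (Fin p) ℂ) (T : Matrix (Fin r) (Fin r) ℂ),
        S.PosSemidef ∧ T.PosSemidef ∧
        (Matrix.fromBlocks S (Matrix.fromCols X A)
            (Matrix.fromRows Xᴴ Aᴴ)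
            (Matrix.fromBlocks T Bᴴ B (1 : Matrix (Fin q) (Fin q) ℂ))).PosSemidef ∧
        ((S - A * Aᴴ).trace).re ≤ 0 := by
  simp_rw [posSemidef_fromBlocks_fromCols_iff]
  constructor
  · rintro rfl
    refine ⟨A * Aᴴ, Bᴴ * B, posSemidef_self_mul_conjTranspose A,
      posSemidef_conjTranspose_mul_self B, ?_, by simp⟩
    simpa using PosSemidef.zero
  · rintro ⟨S, T, -, -, hblock, htr⟩
    have hS : S - A * Aᴴ = 0 := (hblock.submatrix Sum.inl).eq_zero_of_re_trace_nonpos htr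
    rw [hS] at hblock
    exact sub_eq_zero.mp hblock.eq_zero_of_fromBlocks_zero
end

section
/- Suppose the block matrix [[S, X, A],[Xᴴ, T, Bᴴ],[Aᴴ, B, I]] is Hermitian positive semidefinite and Tr(S) ≤ Tr(AAᴴ). Then X = AB. -/
/-!
Write the positive semidefinite block matrix as a Gram matrix `Lᴴ * L` and split the columns of
`L` as `L₁, L₂, L₃`. Then `X = L₁ᴴ L₂`, `A = L₁ᴴ L₃`, `B = L₃ᴴ L₂` and `L₃ᴴ L₃ = 1`, so
`P = L₃ L₃ᴴ` is an orthogonal projection. By Pythagoras `Tr S - Tr (A Aᴴ) = ‖L₁ - P L₁‖²`, so the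
trace hypothesis forces `L₁ = P L₁`, whence `X = L₁ᴴ P L₂ = A B`.
-/

open Matrix ComplexOrder

namespace Matrix

variable {𝕜 : Type*} [RCLike 𝕜] {m n k : Type*} [Fintype m] [Fintype n] [Fintype k]

theorem PosSemidef.exists_eq_conjTranspose_mul_self [DecidableEq n] {M : Matrix n n 𝕜}
    (hM : M.PosSemidef) : ∃ L : Matrix n n 𝕜, M = Lᴴ * L := by
  open scoped MatrixOrder in
  exact CStarAlgebra.nonneg_iff_eq_star_mul_self.mp hM.nonneg

theorem eq_zero_of_re_trace_conjTranspose_mul_self_nonpos {K : Matrix m n 𝕜}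
    (hK : RCLike.re (Kᴴ * K).trace ≤ 0) : K = 0 := by
  obtain ⟨hre, him⟩ := RCLike.nonneg_iff.mp (posSemidef_conjTranspose_mul_self K).trace_nonneg
  rw [← trace_conjTranspose_mul_self_eq_zero_iff]
  exact RCLike.ext (by simpa using le_antisymm hK hre) (by simpa using him)

theorem eq_mul_conjTranspose_mul_of_re_trace_le [DecidableEq k] {U : Matrix m k 𝕜}
    {V : Matrix m n 𝕜} (hU : Uᴴ * U = 1)
    (hV : RCLike.re (Vᴴ * V).trace ≤ RCLike.re ((Vᴴ * U) * (Vᴴ * U)ᴴ).trace) :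
    V = U * (Uᴴ * V) := by
  set K := V - U * (Uᴴ * V)
  have hK : Kᴴ * K = Vᴴ * V - (Vᴴ * U) * (Vᴴ * U)ᴴ := by
    have hUUV : U * (Uᴴ * (U * (Uᴴ * V))) = U * (Uᴴ * V) := by
      rw [← Matrix.mul_assoc Uᴴ U, hU, Matrix.one_mul]
    simp only [K, conjTranspose_sub, conjTranspose_mul, conjTranspose_conjTranspose, Matrix.sub_mul,
      Matrix.mul_sub, Matrix.mul_assoc, hUUV]
    abel
  rw [← sub_eq_zero]
  apply eq_zero_of_re_trace_conjTranspose_mul_self_nonpos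
  rw [hK, trace_sub, map_sub]
  exact sub_nonpos.mpr hV

theorem conjTranspose_fromCols_mul_fromCols {n₁ n₂ : Type*} (L₁ : Matrix m n₁ 𝕜)
    (L₂ : Matrix m n₂ 𝕜) :
    (fromCols L₁ L₂)ᴴ * fromCols L₁ L₂ = fromBlocks (L₁ᴴ * L₁) (L₁ᴴ * L₂) (L₂ᴴ * L₁) (L₂ᴴ * L₂) := by
  rw [conjTranspose_fromCols_eq_fromRows_conjTranspose, fromRows_mul_fromCols]

end Matrix

theorem stmt_5_general (p q r : ℕ)
    (S : Matrix (Fin p) (Fin p) ℂ) (T : Matrix (Fin r) (Fin r) ℂ)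
    (X : Matrix (Fin p) (Fin r) ℂ) (A : Matrix (Fin p) (Fin q) ℂ)
    (B : Matrix (Fin q) (Fin r) ℂ)
    (hPSD : (Matrix.fromBlocks S (Matrix.fromCols X A)
        (Matrix.fromRows Xᴴ Aᴴ)
        (Matrix.fromBlocks T Bᴴ B (1 : Matrix (Fin q) (Fin q) ℂ))).PosSemidef)
    (htr : (S.trace).re ≤ ((A * Aᴴ).trace).re) :
    X = A * B := by
  obtain ⟨L, hL⟩ := hPSD.exists_eq_conjTranspose_mul_self
  obtain ⟨L₁, L₂₃, rfl⟩ : ∃ L₁ L₂₃, L = fromCols L₁ L₂₃ := ⟨_, _, (fromCols_toCols L).symm⟩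
  obtain ⟨L₂, L₃, rfl⟩ : ∃ L₂ L₃, L₂₃ = fromCols L₂ L₃ := ⟨_, _, (fromCols_toCols L₂₃).symm⟩
  rw [conjTranspose_fromCols_mul_fromCols, conjTranspose_fromCols_mul_fromCols, mul_fromCols,
    fromBlocks_inj, fromBlocks_inj, fromCols_ext_iff] at hL
  obtain ⟨rfl, ⟨rfl, rfl⟩, -, -, -, rfl, hL₃⟩ := hL
  have hL₁ := eq_mul_conjTranspose_mul_of_re_trace_le hL₃.symm htr
  calc L₁ᴴ * L₂ = (L₃ * (L₃ᴴ * L₁))ᴴ * L₂ := by rw [← hL₁]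
    _ = L₁ᴴ * L₃ * (L₃ᴴ * L₂) := by
      simp only [conjTranspose_mul, conjTranspose_conjTranspose, Matrix.mul_assoc]

/-- 'If' direction of the bilinear-product LMI characterization: if the block matrix
`[[S, X, A],[Xᴴ, T, Bᴴ],[Aᴴ, B, I]]` is Hermitian PSD and `Tr S ≤ Tr (A Aᴴ)`,
then `X = A * B`. -/
theorem stmt_5 (p q r : ℕ)
    (S : Matrix (Fin p) (Fin p) ℂ) (T : Matrix (Fin r) (Fin r) ℂ)
    (X : Matrix (Fin p) (Fin r) ℂ) (A : Matrix (Fin p) (Fin q) ℂ)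
    (B : Matrix (Fin q) (Fin r) ℂ)
    (hS : S.IsHermitian) (hT : T.IsHermitian)
    (hPSD : (Matrix.fromBlocks S (Matrix.fromCols X A)
        (Matrix.fromRows Xᴴ Aᴴ)
        (Matrix.fromBlocks T Bᴴ B (1 : Matrix (Fin q) (Fin q) ℂ))).PosSemidef)
    (htr : (S.trace).re ≤ ((A * Aᴴ).trace).re) :
    X = A * B :=
  stmt_5_general p q r S T X A B hPSD htr
end

section
/- Let P = [[q·I_n, 0],[0, -qε² - c]] with q ≥ 0, ε > 0, c > 0, and G = [I_n, ḡ] ∈ ℂ^{n×(n+1)} for ḡ ∈ ℂ^n. If P - Gᴴ X̃ G ⪰ 0 for some Hermitian X̃ ∈ ℍ^n, then for all Δg ∈ ℂ^n with ‖Δg‖₂ ≤ ε, it holds that (ḡ+Δg)ᴴ X̃ (ḡ+Δg) ≤ -c. -/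
/-!
Evaluate the LMI at `v = (Δg, 1)`. Since `G v = ḡ + Δg`, the form of `Gᴴ X̃ G` at `v` is
`(ḡ+Δg)ᴴ X̃ (ḡ+Δg)`, while the form of `P` at `v` is `q (‖Δg‖² - ε²) - c ≤ -c`;
positive semidefiniteness of `P - Gᴴ X̃ G` compares the two.
-/

open Matrix ComplexOrder

namespace Matrix

variable {α : Type*} {m n ι : Type*} [Fintype n]

theorem fromCols_replicateCol_mulVec_sumElim [NonAssocSemiring α] [Fintype ι] [Unique ι]
    (A : Matrix m n α) (g : m → α) (x : n → α) :
    fromCols A (replicateCol ι g) *ᵥ Sum.elim x (fun _ => 1) = A *ᵥ x + g := by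
  ext i
  simp [mulVec, dotProduct, replicateCol]

theorem star_sumElim_dotProduct_fromBlocks_mulVec [CommSemiring α] [StarRing α] [DecidableEq n]
    [Fintype ι] [Unique ι] (a b : α) (x : n → α) :
    star (Sum.elim x (fun _ : ι => 1)) ⬝ᵥ
        fromBlocks (a • 1) 0 0 (of fun _ _ : ι => b) *ᵥ Sum.elim x (fun _ => 1) =
      a * (star x ⬝ᵥ x) + b := by
  rw [Function.star_sumElim, fromBlocks_mulVec, sumElim_dotProduct_sumElim]
  simp only [smul_mulVec, one_mulVec, zero_mulVec, add_zero, zero_add, dotProduct_smul,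
    smul_eq_mul]
  simp [mulVec, dotProduct]

theorem star_dotProduct_conjTranspose_mul_mul_mulVec [Fintype m] [CommSemiring α] [StarRing α]
    (G : Matrix m n α) (X : Matrix m m α) (v : n → α) :
    star v ⬝ᵥ (Gᴴ * X * G) *ᵥ v = star (G *ᵥ v) ⬝ᵥ X *ᵥ (G *ᵥ v) := by
  rw [← mulVec_mulVec, ← mulVec_mulVec, dotProduct_mulVec, ← star_mulVec]

end Matrix

section RCLike

variable {𝕜 : Type*} [RCLike 𝕜] {n : Type*} [Fintype n]

theorem RCLike.re_star_dotProduct_self (x : n → 𝕜) :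
    RCLike.re (star x ⬝ᵥ x) = ∑ i, ‖x i‖ ^ 2 := by
  simp only [dotProduct, Pi.star_apply, RCLike.star_def, RCLike.conj_mul, map_sum]
  norm_cast

theorem Matrix.PosSemidef.re_dotProduct_mulVec_le {P M : Matrix n n 𝕜} (h : (P - M).PosSemidef)
    (v : n → 𝕜) : RCLike.re (star v ⬝ᵥ M *ᵥ v) ≤ RCLike.re (star v ⬝ᵥ P *ᵥ v) := by
  have := (RCLike.nonneg_iff.mp (h.dotProduct_mulVec_nonneg v)).1
  rwa [sub_mulVec, dotProduct_sub, map_sub, sub_nonneg] at this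

end RCLike

theorem stmt_14_general (n : ℕ) (q ε c : ℝ) (hq : 0 ≤ q)
    (gbar : Fin n → ℂ) (Xt : Matrix (Fin n) (Fin n) ℂ)
    (hPSD : (Matrix.fromBlocks ((q : ℂ) • (1 : Matrix (Fin n) (Fin n) ℂ)) 0 0
          (Matrix.of fun _ _ : Fin 1 => ((-(q * ε ^ 2) - c : ℝ) : ℂ)) -
        (Matrix.fromCols (1 : Matrix (Fin n) (Fin n) ℂ) (Matrix.replicateCol (Fin 1) gbar))ᴴ *
          Xt * Matrix.fromCols (1 : Matrix (Fin n) (Fin n) ℂ)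
            (Matrix.replicateCol (Fin 1) gbar)).PosSemidef) :
    ∀ Δg : Fin n → ℂ, Real.sqrt (∑ i, ‖Δg i‖ ^ 2) ≤ ε →
      (star (gbar + Δg) ⬝ᵥ Xt.mulVec (gbar + Δg)).re ≤ -c := by
  intro Δg hΔg
  have hnorm : ∑ i, ‖Δg i‖ ^ 2 ≤ ε ^ 2 := (Real.sqrt_le_iff.mp hΔg).2
  -- pass from `Complex.ofReal` and `Complex.re` to the (definitionally equal) `RCLike` versions
  rw [← RCLike.ofReal_eq_complex_ofReal] at hPSD
  rw [← RCLike.re_to_complex]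
  have key := hPSD.re_dotProduct_mulVec_le (Sum.elim Δg fun _ => 1)
  rw [star_dotProduct_conjTranspose_mul_mul_mulVec, fromCols_replicateCol_mulVec_sumElim,
    one_mulVec, add_comm, star_sumElim_dotProduct_fromBlocks_mulVec, map_add,
    RCLike.re_ofReal_mul, RCLike.re_star_dotProduct_self, RCLike.ofReal_re] at key
  linarith [mul_le_mul_of_nonneg_left hnorm hq]

/-- LMI sufficient condition for the worst-case robust QoS constraint: if
`P - Gᴴ X̃ G ⪰ 0` with `P = [[q I, 0],[0, -qε² - c]]` and `G = [I, ḡ]`, then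
`(ḡ+Δg)ᴴ X̃ (ḡ+Δg) ≤ -c` for all `‖Δg‖ ≤ ε`. -/
theorem stmt_14 (n : ℕ) (hn : 1 ≤ n) (q ε c : ℝ) (hq : 0 ≤ q) (hε : 0 < ε) (hc : 0 < c)
    (gbar : Fin n → ℂ) (Xt : Matrix (Fin n) (Fin n) ℂ) (hXt : Xt.IsHermitian)
    (hPSD : (Matrix.fromBlocks ((q : ℂ) • (1 : Matrix (Fin n) (Fin n) ℂ)) 0 0
          (Matrix.of fun _ _ : Fin 1 => ((-(q * ε ^ 2) - c : ℝ) : ℂ)) -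
        (Matrix.fromCols (1 : Matrix (Fin n) (Fin n) ℂ) (Matrix.replicateCol (Fin 1) gbar))ᴴ *
          Xt * Matrix.fromCols (1 : Matrix (Fin n) (Fin n) ℂ)
            (Matrix.replicateCol (Fin 1) gbar)).PosSemidef) :
    ∀ Δg : Fin n → ℂ, Real.sqrt (∑ i, ‖Δg i‖ ^ 2) ≤ ε →
      (star (gbar + Δg) ⬝ᵥ Xt.mulVec (gbar + Δg)).re ≤ -c :=
  stmt_14_general n q ε c hq gbar Xt hPSD
end

section
/- Let G = [I_n, ḡ] ∈ ℂ^{n×(n+1)} with ḡ ∈ ℂ^n, and let A ∈ ℍ^{n+1} be Hermitian PSD. Suppose A(P - GᴴX̃G) = 0 where P = [[qI_n, 0],[0, -qε² - c]], q > 0, and qI_n - X̃ is nonsingular (X̃ ∈ ℍ^n Hermitian). Then rank(G A Gᴴ) ≤ 1. -/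
/-!
Write `G = [I, ḡ]` and `R = [I; 0]`, so that `G R = I` and `P R = q R`. Multiplying the
slackness condition `A P = A Gᴴ X̃ G` by `G` on the left and `R` on the right gives
`G A Gᴴ X̃ = q G A R`, hence `G A Gᴴ (q I - X̃) = q G A (Gᴴ - R)`. Since `Gᴴ - R = [0; ḡᴴ]` has a
single nonzero row, the right-hand side has rank at most one, and multiplying by the invertible
`q I - X̃` does not change the rank of the left-hand side.
-/

open Matrix ComplexOrder

namespace Matrix

variable {k m m' n R : Type*}

theorem mul_mul_smul_one_sub_eq_of_mul_eq [Fintype k] [Fintype m] [CommRing R] [DecidableEq m]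
    {G : Matrix m k R} {A P : Matrix k k R} {H S : Matrix k m R} {X : Matrix m m R} (q : R)
    (hGS : G * S = 1) (hPS : P * S = q • S) (hAP : A * P = A * H * X * G) :
    G * A * H * (q • 1 - X) = (q • (G * A)) * (H - S) := by
  have hX : G * A * H * X = q • (G * A * S) :=
    calc G * A * H * X = G * (A * H * X * G) * S := by
          simp only [Matrix.mul_assoc, hGS, Matrix.mul_one]
      _ = G * A * (P * S) := by rw [← hAP]; simp only [Matrix.mul_assoc]
      _ = q • (G * A * S) := by rw [hPS, Matrix.mul_smul]
  rw [Matrix.mul_sub, Matrix.mul_sub, Matrix.mul_smul, Matrix.mul_one, hX, Matrix.smul_mul,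
    Matrix.smul_mul]

theorem rank_fromRows_zero_le [Fintype m'] [Fintype n] [CommRing R] [Nontrivial R]
    [DecidableEq m'] (W : Matrix m' n R) :
    (fromRows (0 : Matrix m n R) W).rank ≤ Fintype.card m' := by
  have hW : fromRows (0 : Matrix m n R) W = fromRows (0 : Matrix m m' R) 1 * W := by
    simp [fromRows_mul]
  rw [hW]
  exact (rank_mul_le_right _ _).trans (rank_le_card_height W)

section Blocks

variable [DecidableEq m]

theorem fromCols_one_mul_fromRows_one_zero [Fintype m] [Fintype m'] [Semiring R]
    (B : Matrix m m' R) : fromCols (1 : Matrix m m R) B * fromRows (1 : Matrix m m R) (0 : Matrix m' m R) = 1 := by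
  simp [fromCols_mul_fromRows]

theorem fromBlocks_smul_one_zero_mul_fromRows_one_zero [Fintype m] [Fintype m'] [Semiring R]
    (q : R) (D : Matrix m' m' R) :
    fromBlocks (q • 1 : Matrix m m R) (0 : Matrix m m' R) 0 D * fromRows (1 : Matrix m m R) (0 : Matrix m' m R) =
      q • fromRows (1 : Matrix m m R) (0 : Matrix m' m R) := by
  rw [fromBlocks_mul_fromRows]
  ext (i | i) j <;> simp

theorem conjTranspose_fromCols_one_sub_fromRows_one_zero [Ring R] [StarRing R]
    (B : Matrix m m' R) :
    (fromCols (1 : Matrix m m R) B)ᴴ - fromRows (1 : Matrix m m R) (0 : Matrix m' m R) = fromRows 0 Bᴴ := by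
  rw [conjTranspose_fromCols_eq_fromRows_conjTranspose]
  ext (i | i) j <;> simp

end Blocks

end Matrix

theorem stmt_17_general (n : ℕ) (q ε c : ℝ)
    (gbar : Fin n → ℂ)
    (A : Matrix (Fin n ⊕ Fin 1) (Fin n ⊕ Fin 1) ℂ)
    (Xt : Matrix (Fin n) (Fin n) ℂ)
    (hinv : IsUnit ((q : ℂ) • (1 : Matrix (Fin n) (Fin n) ℂ) - Xt).det)
    (hcomp : A * (Matrix.fromBlocks ((q : ℂ) • (1 : Matrix (Fin n) (Fin n) ℂ)) 0 0
          (Matrix.of fun _ _ : Fin 1 => ((-(q * ε ^ 2) - c : ℝ) : ℂ)) -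
        (Matrix.fromCols (1 : Matrix (Fin n) (Fin n) ℂ) (Matrix.replicateCol (Fin 1) gbar))ᴴ *
          Xt * Matrix.fromCols (1 : Matrix (Fin n) (Fin n) ℂ)
            (Matrix.replicateCol (Fin 1) gbar)) = 0) :
    (Matrix.fromCols (1 : Matrix (Fin n) (Fin n) ℂ) (Matrix.replicateCol (Fin 1) gbar) * A *
        (Matrix.fromCols (1 : Matrix (Fin n) (Fin n) ℂ)
          (Matrix.replicateCol (Fin 1) gbar))ᴴ).rank ≤ 1 := by
  set G := fromCols (1 : Matrix (Fin n) (Fin n) ℂ) (replicateCol (Fin 1) gbar)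
  set P := fromBlocks ((q : ℂ) • (1 : Matrix (Fin n) (Fin n) ℂ)) 0 0
    (of fun _ _ : Fin 1 => ((-(q * ε ^ 2) - c : ℝ) : ℂ))
  have hAP : A * P = A * Gᴴ * Xt * G := by
    rw [Matrix.mul_sub, sub_eq_zero] at hcomp
    simpa only [Matrix.mul_assoc] using hcomp
  have hfactor := mul_mul_smul_one_sub_eq_of_mul_eq (q : ℂ)
    (fromCols_one_mul_fromRows_one_zero _) (fromBlocks_smul_one_zero_mul_fromRows_one_zero _ _)
    hAP
  rw [← rank_mul_eq_left_of_isUnit_det _ _ hinv, hfactor,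
    conjTranspose_fromCols_one_sub_fromRows_one_zero]
  calc _ ≤ _ := rank_mul_le_right _ _
    _ ≤ Fintype.card (Fin 1) := rank_fromRows_zero_le _
    _ = 1 := Fintype.card_fin 1

/-- Rank-one step: from complementary slackness `A (P - Gᴴ X̃ G) = 0` with `A ⪰ 0`,
`q I - X̃` nonsingular, it follows that `rank(G A Gᴴ) ≤ 1`. -/
theorem stmt_17 (n : ℕ) (q ε c : ℝ) (hq : 0 < q)
    (gbar : Fin n → ℂ)
    (A : Matrix (Fin n ⊕ Fin 1) (Fin n ⊕ Fin 1) ℂ) (hA : A.PosSemidef)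
    (Xt : Matrix (Fin n) (Fin n) ℂ) (hXt : Xt.IsHermitian)
    (hinv : IsUnit ((q : ℂ) • (1 : Matrix (Fin n) (Fin n) ℂ) - Xt).det)
    (hcomp : A * (Matrix.fromBlocks ((q : ℂ) • (1 : Matrix (Fin n) (Fin n) ℂ)) 0 0
          (Matrix.of fun _ _ : Fin 1 => ((-(q * ε ^ 2) - c : ℝ) : ℂ)) -
        (Matrix.fromCols (1 : Matrix (Fin n) (Fin n) ℂ) (Matrix.replicateCol (Fin 1) gbar))ᴴ *
          Xt * Matrix.fromCols (1 : Matrix (Fin n) (Fin n) ℂ)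
            (Matrix.replicateCol (Fin 1) gbar)) = 0) :
    (Matrix.fromCols (1 : Matrix (Fin n) (Fin n) ℂ) (Matrix.replicateCol (Fin 1) gbar) * A *
        (Matrix.fromCols (1 : Matrix (Fin n) (Fin n) ℂ)
          (Matrix.replicateCol (Fin 1) gbar))ᴴ).rank ≤ 1 :=
  stmt_17_general n q ε c gbar A Xt hinv hcomp
end
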